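/- arXiv:1812.07691 — 4 statements merged into one kernel-verified Lean document; each statement's English description precedes it below -/
import Mathlib

section
/- Let ι be a nonempty type (indexing allocation policies) and f, g : ι → ℝ with 0 ≤ g p ≤ 1 for all p, and suppose the range of f is bounded above. For c ≥ 0 set V c := ⨆ p, (f p − c·g p). Let μ ∈ ℝ. If 0 ≤ c₂ ≤ c₁ and μ − c₁ > V c₁, then μ − c₂ > V c₂. (Hence the allocable condition 'immediate life gain minus penalty exceeds the optimal penalized continuation value' is preserved as the penalty parameter decreases: the allocable set expands monotonically as organ availability increases.) -/
/-! Allocability at penalty `c` reads `c + V c < μ`, and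
`c + V c = ⨆ p, (f p + c * (1 - g p))` is a supremum of functions that are nondecreasing in `c`
because `g ≤ 1`. -/

open Set

section PenalizedValue

variable {ι : Type*} {f g : ι → ℝ}

theorem bddAbove_range_sub_mul (hf : BddAbove (range f)) (hg : ∀ p, 0 ≤ g p) {c : ℝ}
    (hc : 0 ≤ c) : BddAbove (range fun p => f p - c * g p) :=
  BddAbove.range_mono f (fun p => sub_le_self _ (mul_nonneg hc (hg p))) hf

theorem add_ciSup_sub_mul_le [Nonempty ι] (hg : ∀ p, g p ≤ 1) {c₁ c₂ : ℝ} (hc : c₂ ≤ c₁)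
    (hbdd : BddAbove (range fun p => f p - c₁ * g p)) :
    c₂ + ⨆ p, (f p - c₂ * g p) ≤ c₁ + ⨆ p, (f p - c₁ * g p) := by
  rw [← le_sub_iff_add_le']
  refine ciSup_le fun p => ?_
  have hterm : f p - c₁ * g p ≤ ⨆ q, (f q - c₁ * g q) := le_ciSup hbdd p
  have hpenalty : (c₁ - c₂) * g p ≤ c₁ - c₂ :=
    mul_le_of_le_one_right (sub_nonneg.2 hc) (hg p)
  linarith

theorem monotoneOn_add_ciSup_sub_mul [Nonempty ι] (hf : BddAbove (range f))
    (hg : ∀ p, 0 ≤ g p ∧ g p ≤ 1) :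
    MonotoneOn (fun c => c + ⨆ p, (f p - c * g p)) (Ici 0) := fun _ _ _ hc₁ hc =>
  add_ciSup_sub_mul_le (fun p => (hg p).2) hc
    (bddAbove_range_sub_mul hf (fun p => (hg p).1) hc₁)

end PenalizedValue

/-- If a state–waiting-time pair is allocable at penalty `c₁` (the immediate life gain `μ`
minus the penalty exceeds the optimal penalized continuation value `V c₁`), then it is
allocable at any smaller penalty `c₂`: the allocable set expands monotonically as organ
availability increases. Here `f p` is the expected life gain of continuation policy `p`
and `g p ∈ [0,1]` is the probability of future transplantation under `p`. -/
theorem allocable_set_monotone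
    {ι : Type*} [Nonempty ι] (f g : ι → ℝ)
    (hg : ∀ p, 0 ≤ g p ∧ g p ≤ 1)
    (hf : BddAbove (Set.range f))
    (μ : ℝ) (c₁ c₂ : ℝ) (hc₂ : 0 ≤ c₂) (hc : c₂ ≤ c₁)
    (h : μ - c₁ > ⨆ p, (f p - c₁ * g p)) :
    μ - c₂ > ⨆ p, (f p - c₂ * g p) := by
  have hV : c₂ + ⨆ p, (f p - c₂ * g p) ≤ c₁ + ⨆ p, (f p - c₁ * g p) :=
    monotoneOn_add_ciSup_sub_mul hf hg (mem_Ici.2 hc₂) (mem_Ici.2 (hc₂.trans hc)) hc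
  linarith
end

section
/- Fix n, T ∈ ℕ, substochastic transition matrices q (q s i j ≥ 0 and ∑_j q s i j ≤ 1 for all s < T, i), and rewards μ s i ∈ ℝ. For c ∈ ℝ define K_c by backward recursion K_c T i = 0 and K_c s i = max (μ s i − c) (∑_j q s i j · K_c (s+1) j) for s < T. Then for all c₁ ≥ c₂, all s ≤ T and all i: K_{c₁} s i ≤ K_{c₂} s i ≤ K_{c₁} s i + (c₁ − c₂). That is, the optimal penalized value is antitone and 1-Lipschitz from above in the penalty parameter. -/
/-!
Backward induction on `s`. At the horizon both value functions vanish. If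
`K₁ ≤ K₂ ≤ K₁ + (c₁ - c₂)` holds at time `s + 1`, it survives one Bellman step: the
transplant option changes by exactly `c₁ - c₂`, and because `q s i ·` is a nonnegative
weight vector of total mass at most one, the continuation value is monotone and a
constant shift `d ≥ 0` of the future raises it by at most `d`.
-/

open Finset

section SubstochasticWeights

variable {ι : Type*} [Fintype ι] {q : ι → ℝ}

theorem sum_mul_le_sum_mul_of_le (hq0 : ∀ j, 0 ≤ q j) {V W : ι → ℝ} (h : ∀ j, V j ≤ W j) :
    ∑ j, q j * V j ≤ ∑ j, q j * W j :=
  sum_le_sum fun j _ => mul_le_mul_of_nonneg_left (h j) (hq0 j)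

theorem sum_mul_le_sum_mul_add_of_le_add (hq0 : ∀ j, 0 ≤ q j) (hq1 : ∑ j, q j ≤ 1)
    {d : ℝ} (hd : 0 ≤ d) {V W : ι → ℝ} (h : ∀ j, W j ≤ V j + d) :
    ∑ j, q j * W j ≤ ∑ j, q j * V j + d :=
  calc ∑ j, q j * W j ≤ ∑ j, q j * (V j + d) := sum_mul_le_sum_mul_of_le hq0 h
    _ = ∑ j, q j * V j + (∑ j, q j) * d := by simp only [mul_add, sum_add_distrib, sum_mul]
    _ ≤ ∑ j, q j * V j + d := by nlinarith

theorem bellman_step_sandwich (hq0 : ∀ j, 0 ≤ q j) (hq1 : ∑ j, q j ≤ 1) (m : ℝ)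
    {c₁ c₂ : ℝ} (hc : c₂ ≤ c₁) {V₁ V₂ : ι → ℝ}
    (h : ∀ j, V₁ j ≤ V₂ j ∧ V₂ j ≤ V₁ j + (c₁ - c₂)) :
    max (m - c₁) (∑ j, q j * V₁ j) ≤ max (m - c₂) (∑ j, q j * V₂ j) ∧
      max (m - c₂) (∑ j, q j * V₂ j) ≤ max (m - c₁) (∑ j, q j * V₁ j) + (c₁ - c₂) := by
  refine ⟨max_le_max (by linarith) (sum_mul_le_sum_mul_of_le hq0 fun j => (h j).1), ?_⟩
  rw [← max_add_add_right]
  exact max_le_max (by linarith)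
    (sum_mul_le_sum_mul_add_of_le_add hq0 hq1 (sub_nonneg.2 hc) fun j => (h j).2)

end SubstochasticWeights

/-- The optimal penalized value function of the discrete-time allocation problem is
antitone and 1-Lipschitz from above in the penalty parameter: for `c₁ ≥ c₂`,
`K_{c₁} ≤ K_{c₂} ≤ K_{c₁} + (c₁ - c₂)` on the horizon (key inequality in the proof of
Theorem 4.3). -/
theorem bellman_value_antitone_and_lipschitz_in_penalty
    (n T : ℕ) (q : ℕ → Fin n → Fin n → ℝ) (μ : ℕ → Fin n → ℝ)
    (hq0 : ∀ s < T, ∀ i j, 0 ≤ q s i j)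
    (hq1 : ∀ s < T, ∀ i, ∑ j, q s i j ≤ 1)
    (c₁ c₂ : ℝ) (hc : c₂ ≤ c₁)
    (K₁ K₂ : ℕ → Fin n → ℝ)
    (hK₁T : ∀ i, K₁ T i = 0)
    (hK₁ : ∀ s < T, ∀ i, K₁ s i = max (μ s i - c₁) (∑ j, q s i j * K₁ (s + 1) j))
    (hK₂T : ∀ i, K₂ T i = 0)
    (hK₂ : ∀ s < T, ∀ i, K₂ s i = max (μ s i - c₂) (∑ j, q s i j * K₂ (s + 1) j)) :
    ∀ s ≤ T, ∀ i, K₁ s i ≤ K₂ s i ∧ K₂ s i ≤ K₁ s i + (c₁ - c₂) := by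
  intro s hs
  induction hs using Nat.decreasingInduction with
  | self => intro i; simp only [hK₁T, hK₂T, zero_add, le_refl, sub_nonneg.2 hc, and_self]
  | of_succ s hsT ih =>
    intro i
    rw [hK₁ s hsT i, hK₂ s hsT i]
    exact bellman_step_sandwich (hq0 s hsT i) (hq1 s hsT i) (μ s i) hc ih
end

section
/- Fix n, T ∈ ℕ, substochastic transition matrices q (q s i j ≥ 0 and ∑_j q s i j ≤ 1 for all s < T, i), and rewards μ s i ∈ ℝ. For c ∈ ℝ define K_c by backward recursion K_c T i = 0 and K_c s i = max (μ s i − c) (∑_j q s i j · K_c (s+1) j), and define the allocable set 𝒜_c = {(s,i) : s < T and μ s i − c > ∑_j q s i j · K_c (s+1) j}. Then for all c₁ ≥ c₂, 𝒜_{c₁} ⊆ 𝒜_{c₂}: the allocable set expands monotonically as the penalty parameter decreases. -/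
/-!
Lowering the penalty from `c₁` to `c₂` raises every value `K_c` by at most `c₁ - c₂`: this holds
at the horizon, survives `max`, and survives the expectation step because a substochastic
averaging does not amplify a nonnegative constant shift. Hence, at an allocable pair for `c₁`,
`μ - c₂ = (μ - c₁) + (c₁ - c₂) > 𝔼 K_{c₁} + (c₁ - c₂) ≥ 𝔼 K_{c₂}`.
-/

open Finset

theorem sum_mul_le_sum_mul_add_of_le_add_s10 {ι : Type*} [Fintype ι] {w f g : ι → ℝ} {d : ℝ}
    (hw : ∀ j, 0 ≤ w j) (hw1 : ∑ j, w j ≤ 1) (hd : 0 ≤ d) (hfg : ∀ j, f j ≤ g j + d) :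
    ∑ j, w j * f j ≤ ∑ j, w j * g j + d :=
  calc ∑ j, w j * f j
      ≤ ∑ j, w j * (g j + d) := sum_le_sum fun j _ => mul_le_mul_of_nonneg_left (hfg j) (hw j)
    _ = ∑ j, w j * g j + (∑ j, w j) * d := by rw [sum_mul, ← sum_add_distrib]; simp only [mul_add]
    _ ≤ ∑ j, w j * g j + d := by
        gcongr
        exact mul_le_of_le_one_left hd hw1

theorem penalizedValue_le_add_of_penalty_le {ι : Type*} [Fintype ι] (T : ℕ)
    (q : ℕ → ι → ι → ℝ) (μ : ℕ → ι → ℝ)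
    (hq0 : ∀ s < T, ∀ i j, 0 ≤ q s i j) (hq1 : ∀ s < T, ∀ i, ∑ j, q s i j ≤ 1)
    {c₁ c₂ : ℝ} (hc : c₂ ≤ c₁) {K₁ K₂ : ℕ → ι → ℝ}
    (hK₁T : ∀ i, K₁ T i = 0)
    (hK₁ : ∀ s < T, ∀ i, K₁ s i = max (μ s i - c₁) (∑ j, q s i j * K₁ (s + 1) j))
    (hK₂T : ∀ i, K₂ T i = 0)
    (hK₂ : ∀ s < T, ∀ i, K₂ s i = max (μ s i - c₂) (∑ j, q s i j * K₂ (s + 1) j))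
    {s : ℕ} (hs : s ≤ T) (i : ι) :
    K₂ s i ≤ K₁ s i + (c₁ - c₂) := by
  induction hs using Nat.decreasingInduction generalizing i with
  | self => simp only [hK₁T, hK₂T, zero_add, sub_nonneg, hc]
  | of_succ s hsT ih =>
    rw [hK₁ s hsT i, hK₂ s hsT i, ← max_add_add_right]
    exact max_le_max (by linarith)
      (sum_mul_le_sum_mul_add_of_le_add_s10 (hq0 s hsT i) (hq1 s hsT i) (sub_nonneg.2 hc) ih)

open Finset in
/-- Theorem 4.3 in the discrete-time, finite-state setting: the allocable set
`𝒜_c = {(s,i) : s < T ∧ μ s i - c > ∑ j, q s i j * K_c (s+1) j}` expands monotonically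
as the penalty parameter decreases: for `c₁ ≥ c₂`, `𝒜_{c₁} ⊆ 𝒜_{c₂}`. -/
theorem allocable_set_monotone_discrete
    (n T : ℕ) (q : ℕ → Fin n → Fin n → ℝ) (μ : ℕ → Fin n → ℝ)
    (hq0 : ∀ s < T, ∀ i j, 0 ≤ q s i j)
    (hq1 : ∀ s < T, ∀ i, ∑ j, q s i j ≤ 1)
    (c₁ c₂ : ℝ) (hc : c₂ ≤ c₁)
    (K₁ K₂ : ℕ → Fin n → ℝ)
    (hK₁T : ∀ i, K₁ T i = 0)
    (hK₁ : ∀ s < T, ∀ i, K₁ s i = max (μ s i - c₁) (∑ j, q s i j * K₁ (s + 1) j))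
    (hK₂T : ∀ i, K₂ T i = 0)
    (hK₂ : ∀ s < T, ∀ i, K₂ s i = max (μ s i - c₂) (∑ j, q s i j * K₂ (s + 1) j)) :
    {p : ℕ × Fin n | p.1 < T ∧ μ p.1 p.2 - c₁ > ∑ j, q p.1 p.2 j * K₁ (p.1 + 1) j} ⊆
      {p : ℕ × Fin n | p.1 < T ∧ μ p.1 p.2 - c₂ > ∑ j, q p.1 p.2 j * K₂ (p.1 + 1) j} := by
  rintro ⟨s, i⟩ ⟨hsT, hallocable⟩
  have hnext : ∀ j, K₂ (s + 1) j ≤ K₁ (s + 1) j + (c₁ - c₂) :=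
    penalizedValue_le_add_of_penalty_le T q μ hq0 hq1 hc hK₁T hK₁ hK₂T hK₂ hsT
  have hcont := sum_mul_le_sum_mul_add_of_le_add_s10 (hq0 s hsT i) (hq1 s hsT i) (sub_nonneg.2 hc) hnext
  exact ⟨hsT, by dsimp only at hallocable ⊢; linarith⟩
end

section
/- Fix n, T ∈ ℕ, substochastic transition matrices q (q s i j ≥ 0 and ∑_j q s i j ≤ 1 for all s < T, i), rewards μ s i ∈ ℝ, a penalty c ∈ ℝ, and an initial occupancy π 0 with π 0 i ≥ 0 for all i. Define K by backward recursion K T i = 0, K s i = max (μ s i − c) (∑_j q s i j · K (s+1) j), and the threshold policy d* s i = (μ s i − c ≥ ∑_j q s i j · K (s+1) j). For any policy d, with λ the 0/1 indicator of d, occupancy π^d (s+1) j = ∑_i π^d s i · (1 − λ s i) · q s i j started from π 0, and transplantation mass ψ^d s i = π^d s i · λ s i, the threshold policy maximizes the aggregate penalized life gain: for every policy d, ∑_{s < T} ∑_i ψ^d s i · (μ s i − c) ≤ ∑_{s < T} ∑_i ψ^{d*} s i · (μ s i − c). -/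
/-!
Let `K` be the Bellman value. For any allocation rate `λ` with `0 ≤ λ ≤ 1` and its occupancy `π`,
pushing `π` one step forward gives `∑ π(s+1) K(s+1) = ∑ π(s) (1 - λ(s)) (q K(s+1))`, so the
total gain telescopes to `∑ π(0) K(0)` minus `∑ π(s) · slack(s)`, where the slack
`K - (λ r + (1 - λ) q K(s+1))` is nonnegative because `K = max r (q K(s+1))`. Occupancies are
nonnegative, so every policy gains at most `∑ π(0) K(0)`, and the threshold policy has zero
slack, so it attains this bound.
-/

open Finset

section Occupancy

variable {ι : Type*} [Fintype ι]

lemma sum_mul_eq_sum_mul_sum_of_forward {p p' l V : ι → ℝ} {Q : ι → ι → ℝ}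
    (hforward : ∀ j, p' j = ∑ i, p i * (1 - l i) * Q i j) :
    ∑ j, p' j * V j = ∑ i, p i * (1 - l i) * ∑ j, Q i j * V j := by
  simp only [hforward, sum_mul, mul_sum, mul_assoc]
  exact sum_comm

variable {T : ℕ} {q : ℕ → ι → ι → ℝ} {lam p : ℕ → ι → ℝ}

lemma occupancy_nonneg (hq : ∀ s < T, ∀ i j, 0 ≤ q s i j) (hlam : ∀ s < T, ∀ i, lam s i ≤ 1)
    (hp0 : ∀ i, 0 ≤ p 0 i)
    (hp : ∀ s < T, ∀ j, p (s + 1) j = ∑ i, p s i * (1 - lam s i) * q s i j) :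
    ∀ s ≤ T, ∀ i, 0 ≤ p s i := by
  intro s
  induction s with
  | zero => exact fun _ => hp0
  | succ s ih =>
    intro hs j
    rw [hp s hs j]
    exact sum_nonneg fun i _ =>
      mul_nonneg (mul_nonneg (ih (Nat.le_of_succ_le hs) i) (sub_nonneg.2 (hlam s hs i))) (hq s hs i j)

variable (r K : ℕ → ι → ℝ)

def bellmanSlack (q : ℕ → ι → ι → ℝ) (lam : ℕ → ι → ℝ) (s : ℕ) (i : ι) : ℝ :=
  K s i - (lam s i * r s i + (1 - lam s i) * ∑ j, q s i j * K (s + 1) j)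

lemma sum_gain_add_sum_bellmanSlack (hKT : ∀ i, K T i = 0)
    (hp : ∀ s < T, ∀ j, p (s + 1) j = ∑ i, p s i * (1 - lam s i) * q s i j) :
    ∑ s ∈ range T, ∑ i, p s i * lam s i * r s i
        + ∑ s ∈ range T, ∑ i, p s i * bellmanSlack r K q lam s i
      = ∑ i, p 0 i * K 0 i := by
  have hstep : ∀ s ∈ range T,
      ∑ i, p s i * lam s i * r s i + ∑ i, p s i * bellmanSlack r K q lam s i
        = ∑ i, p s i * K s i - ∑ i, p (s + 1) i * K (s + 1) i := by
    intro s hs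
    rw [sum_mul_eq_sum_mul_sum_of_forward (hp s (mem_range.1 hs)), ← sum_add_distrib,
      ← sum_sub_distrib]
    exact sum_congr rfl fun i _ => by unfold bellmanSlack; ring
  rw [← sum_add_distrib, sum_congr rfl hstep, sum_range_sub']
  simp [hKT]

lemma sum_gain_le_of_bellmanSlack_nonneg (hKT : ∀ i, K T i = 0)
    (hp : ∀ s < T, ∀ j, p (s + 1) j = ∑ i, p s i * (1 - lam s i) * q s i j)
    (hpnn : ∀ s ≤ T, ∀ i, 0 ≤ p s i) (hslack : ∀ s < T, ∀ i, 0 ≤ bellmanSlack r K q lam s i) :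
    ∑ s ∈ range T, ∑ i, p s i * lam s i * r s i ≤ ∑ i, p 0 i * K 0 i := by
  have hsum : 0 ≤ ∑ s ∈ range T, ∑ i, p s i * bellmanSlack r K q lam s i :=
    sum_nonneg fun s hs => sum_nonneg fun i _ =>
      mul_nonneg (hpnn s (mem_range.1 hs).le i) (hslack s (mem_range.1 hs) i)
  linarith [sum_gain_add_sum_bellmanSlack r K hKT hp]

lemma sum_gain_eq_of_bellmanSlack_eq_zero (hKT : ∀ i, K T i = 0)
    (hp : ∀ s < T, ∀ j, p (s + 1) j = ∑ i, p s i * (1 - lam s i) * q s i j)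
    (hslack : ∀ s < T, ∀ i, bellmanSlack r K q lam s i = 0) :
    ∑ s ∈ range T, ∑ i, p s i * lam s i * r s i = ∑ i, p 0 i * K 0 i := by
  have hsum : ∑ s ∈ range T, ∑ i, p s i * bellmanSlack r K q lam s i = 0 :=
    sum_eq_zero fun s hs => sum_eq_zero fun i _ => by rw [hslack s (mem_range.1 hs) i, mul_zero]
  linarith [sum_gain_add_sum_bellmanSlack r K hKT hp]

end Occupancy

lemma mul_add_one_sub_mul_le_max {l : ℝ} (hl0 : 0 ≤ l) (hl1 : l ≤ 1) (a b : ℝ) :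
    l * a + (1 - l) * b ≤ max a b :=
  Convex.combo_le_max a b hl0 (sub_nonneg.2 hl1) (add_sub_cancel l 1)

lemma ite_mul_add_one_sub_ite_mul_eq_max {d : Bool} {a b : ℝ} (hd : d = true ↔ b ≤ a) :
    (if d then (1 : ℝ) else 0) * a + (1 - if d then (1 : ℝ) else 0) * b = max a b := by
  cases d
  · simp [max_eq_right (le_of_not_ge (mt hd.2 Bool.false_ne_true))]
  · simp [max_eq_left (hd.1 rfl)]

open Finset in
theorem threshold_policy_maximizes_aggregate_gain_general
    (n T : ℕ) (q : ℕ → Fin n → Fin n → ℝ) (μ : ℕ → Fin n → ℝ) (c : ℝ)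
    (pi0 : Fin n → ℝ)
    (hq0 : ∀ s < T, ∀ i j, 0 ≤ q s i j)
    (hpi0 : ∀ i, 0 ≤ pi0 i)
    (K : ℕ → Fin n → ℝ)
    (hKT : ∀ i, K T i = 0)
    (hK : ∀ s < T, ∀ i, K s i = max (μ s i - c) (∑ j, q s i j * K (s + 1) j))
    (dstar : ℕ → Fin n → Bool)
    (hdstar : ∀ s < T, ∀ i,
      dstar s i = true ↔ ∑ j, q s i j * K (s + 1) j ≤ μ s i - c)
    (d : ℕ → Fin n → Bool)
    (pid pistar : ℕ → Fin n → ℝ)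
    (hpid0 : ∀ i, pid 0 i = pi0 i)
    (hpid : ∀ s < T, ∀ j,
      pid (s + 1) j = ∑ i, pid s i * (1 - (if d s i then (1 : ℝ) else 0)) * q s i j)
    (hpistar0 : ∀ i, pistar 0 i = pi0 i)
    (hpistar : ∀ s < T, ∀ j,
      pistar (s + 1) j
        = ∑ i, pistar s i * (1 - (if dstar s i then (1 : ℝ) else 0)) * q s i j) :
    ∑ s ∈ Finset.range T, ∑ i,
        (pid s i * (if d s i then (1 : ℝ) else 0)) * (μ s i - c)
      ≤ ∑ s ∈ Finset.range T, ∑ i,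
        (pistar s i * (if dstar s i then (1 : ℝ) else 0)) * (μ s i - c) := by
  set r : ℕ → Fin n → ℝ := fun s i => μ s i - c
  have hpidnn : ∀ s ≤ T, ∀ i, 0 ≤ pid s i :=
    occupancy_nonneg hq0 (fun s _ i => by split <;> norm_num) (fun i => hpid0 i ▸ hpi0 i) hpid
  have hslack_d : ∀ s < T, ∀ i, 0 ≤ bellmanSlack r K q (fun s i => if d s i then 1 else 0) s i := by
    intro s hs i
    rw [bellmanSlack, sub_nonneg, hK s hs i]
    exact mul_add_one_sub_mul_le_max (by split <;> norm_num) (by split <;> norm_num) _ _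
  have hslack_dstar :
      ∀ s < T, ∀ i, bellmanSlack r K q (fun s i => if dstar s i then 1 else 0) s i = 0 := by
    intro s hs i
    rw [bellmanSlack, sub_eq_zero, hK s hs i]
    exact (ite_mul_add_one_sub_ite_mul_eq_max (hdstar s hs i)).symm
  calc _ ≤ ∑ i, pid 0 i * K 0 i := sum_gain_le_of_bellmanSlack_nonneg r K hKT hpid hpidnn hslack_d
    _ = ∑ i, pistar 0 i * K 0 i := by simp only [hpid0, hpistar0]
    _ = _ := (sum_gain_eq_of_bellmanSlack_eq_zero r K hKT hpistar hslack_dstar).symm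

open Finset in
/-- Theorem 3.3 in the discrete-time, finite-state setting: the threshold policy `d*`,
which transplants exactly when the immediate penalized life gain `μ s i - c` is at least
the optimal penalized continuation value given by the Bellman recursion `K`, maximizes
the aggregate penalized life gain over all admissible policies, subject to the occupancy
dynamics started from a nonnegative initial occupancy. -/
theorem threshold_policy_maximizes_aggregate_gain
    (n T : ℕ) (q : ℕ → Fin n → Fin n → ℝ) (μ : ℕ → Fin n → ℝ) (c : ℝ)
    (pi0 : Fin n → ℝ)
    (hq0 : ∀ s < T, ∀ i j, 0 ≤ q s i j)
    (hq1 : ∀ s < T, ∀ i, ∑ j, q s i j ≤ 1)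
    (hpi0 : ∀ i, 0 ≤ pi0 i)
    (K : ℕ → Fin n → ℝ)
    (hKT : ∀ i, K T i = 0)
    (hK : ∀ s < T, ∀ i, K s i = max (μ s i - c) (∑ j, q s i j * K (s + 1) j))
    (dstar : ℕ → Fin n → Bool)
    (hdstar : ∀ s < T, ∀ i,
      dstar s i = true ↔ ∑ j, q s i j * K (s + 1) j ≤ μ s i - c)
    (d : ℕ → Fin n → Bool)
    (pid pistar : ℕ → Fin n → ℝ)
    (hpid0 : ∀ i, pid 0 i = pi0 i)
    (hpid : ∀ s < T, ∀ j,
      pid (s + 1) j = ∑ i, pid s i * (1 - (if d s i then (1 : ℝ) else 0)) * q s i j)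
    (hpistar0 : ∀ i, pistar 0 i = pi0 i)
    (hpistar : ∀ s < T, ∀ j,
      pistar (s + 1) j
        = ∑ i, pistar s i * (1 - (if dstar s i then (1 : ℝ) else 0)) * q s i j) :
    ∑ s ∈ Finset.range T, ∑ i,
        (pid s i * (if d s i then (1 : ℝ) else 0)) * (μ s i - c)
      ≤ ∑ s ∈ Finset.range T, ∑ i,
        (pistar s i * (if dstar s i then (1 : ℝ) else 0)) * (μ s i - c) :=
  threshold_policy_maximizes_aggregate_gain_general n T q μ c pi0 hq0 hpi0 K hKT hK dstar hdstar d
    pid pistar hpid0 hpid hpistar0 hpistar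
end
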